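/- arXiv:1812.03617 — 3 statements merged into one kernel-verified Lean document; each statement's English description precedes it below -/
import Mathlib

section
/- Let H be a real Hilbert space, a a continuous symmetric bilinear form with finite-dimensional kernel Ker(a) = {w : a(w,v) = 0 for all v}, and suppose the quadratic form A(u) = a(u,u) is coercive on the orthogonal complement of Ker(a), i.e. A(u) ≥ γ‖u‖² for all u ⟂ Ker(a), with γ > 0. If V is a closed subspace of H with V ∩ Ker(a) = {0} and β(V, Ker(a)) > 0, where β(V,W) = √(1 - α(V,W)²) and α(V,W) = sup{⟨v,w⟩ : v ∈ V, w ∈ W, ‖v‖ = ‖w‖ = 1}, then A is coercive on V with constant γ·β(V, Ker(a))². -/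
/-!
Split `u ∈ V` as `u = w + p` with `w ∈ Ker a` and `p ⟂ Ker a`. As `w` lies in the kernel of the
symmetric form, `A u = A p ≥ γ ‖p‖²`. Since `‖w‖² = ⟪u, w⟫ ≤ α ‖u‖ ‖w‖` we get `‖w‖ ≤ α ‖u‖`,
and Pythagoras gives `‖p‖² = ‖u‖² - ‖w‖² ≥ (1 - α²) ‖u‖² = β² ‖u‖²`.
-/

namespace Submodule

variable {H : Type*} [NormedAddCommGroup H] [InnerProductSpace ℝ H]

/-- The paper's `α(V, W)`; it is `0`, the junk value of `sSup ∅`, when `V` or `W` is `⊥`. -/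
noncomputable def cosAngle (V W : Submodule ℝ H) : ℝ :=
  sSup {r : ℝ | ∃ v ∈ V, ∃ w ∈ W, ‖v‖ = 1 ∧ ‖w‖ = 1 ∧ r = (inner ℝ v w : ℝ)}

noncomputable def sinAngle (V W : Submodule ℝ H) : ℝ :=
  Real.sqrt (1 - cosAngle V W ^ 2)

variable {V W : Submodule ℝ H}

theorem inner_le_cosAngle_of_norm_eq_one {v w : H} (hv : v ∈ V) (hw : w ∈ W)
    (hv1 : ‖v‖ = 1) (hw1 : ‖w‖ = 1) : inner ℝ v w ≤ cosAngle V W := by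
  refine le_csSup ⟨1, ?_⟩ ⟨v, hv, w, hw, hv1, hw1, rfl⟩
  rintro _ ⟨v', -, w', -, hv', hw', rfl⟩
  simpa [hv', hw'] using real_inner_le_norm v' w'

theorem inner_le_cosAngle_mul {v w : H} (hv : v ∈ V) (hw : w ∈ W) :
    inner ℝ v w ≤ cosAngle V W * ‖v‖ * ‖w‖ := by
  rcases eq_or_ne v 0 with rfl | hv0
  · simp
  rcases eq_or_ne w 0 with rfl | hw0
  · simp
  have hvpos : 0 < ‖v‖ := norm_pos_iff.mpr hv0
  have hwpos : 0 < ‖w‖ := norm_pos_iff.mpr hw0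
  have hunit := inner_le_cosAngle_of_norm_eq_one (V.smul_mem ‖v‖⁻¹ hv) (W.smul_mem ‖w‖⁻¹ hw)
    (norm_smul_inv_norm hv0) (norm_smul_inv_norm hw0)
  rw [real_inner_smul_left, real_inner_smul_right, ← mul_assoc, ← mul_inv,
    inv_mul_le_iff₀ (mul_pos hvpos hwpos)] at hunit
  linarith

theorem norm_starProjection_sq_le [W.HasOrthogonalProjection] {u : H} (hu : u ∈ V) :
    ‖W.starProjection u‖ ^ 2 ≤ cosAngle V W ^ 2 * ‖u‖ ^ 2 := by
  have hx : ‖W.starProjection u‖ ^ 2 ≤ cosAngle V W * ‖u‖ * ‖W.starProjection u‖ := by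
    calc ‖W.starProjection u‖ ^ 2 = inner ℝ u (W.starProjection u) := by
          simpa [real_inner_comm] using (re_inner_starProjection_eq_normSq W u).symm
      _ ≤ cosAngle V W * ‖u‖ * ‖W.starProjection u‖ :=
          inner_le_cosAngle_mul hu (W.starProjection_apply_mem u)
  have hx0 := norm_nonneg (W.starProjection u)
  generalize ‖W.starProjection u‖ = x at hx hx0 ⊢
  rcases hx0.eq_or_lt with rfl | hxpos
  · rw [zero_pow two_ne_zero]; positivity
  · have hle : x ≤ cosAngle V W * ‖u‖ := le_of_mul_le_mul_right (by linarith) hxpos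
    simpa [mul_pow] using pow_le_pow_left₀ hx0 hle 2

theorem sinAngle_sq_mul_norm_sq_le [W.HasOrthogonalProjection] {u : H} (hu : u ∈ V) :
    sinAngle V W ^ 2 * ‖u‖ ^ 2 ≤ ‖Wᗮ.starProjection u‖ ^ 2 := by
  have hpyth := W.norm_sq_eq_add_norm_sq_starProjection u
  have hproj := norm_starProjection_sq_le (W := W) hu
  -- `Real.sqrt` clamps a negative radicand to `0`, so `β² = max (1 - α²) 0`.
  rw [sinAngle, Real.sq_sqrt', max_mul_of_nonneg _ _ (sq_nonneg _)]
  exact max_le (by linarith) (by simp)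

end Submodule

theorem LinearMap.apply_add_self_of_apply_eq_zero {H : Type*} [AddCommGroup H] [Module ℝ H]
    (a : H →ₗ[ℝ] H →ₗ[ℝ] ℝ) (hsymm : ∀ u v : H, a u v = a v u) {w : H}
    (hw : ∀ v : H, a w v = 0) (v : H) : a (w + v) (w + v) = a v v := by
  simp [hw, hsymm v w]

theorem coercive_on_transversal_subspace_general
    {H : Type*} [NormedAddCommGroup H] [InnerProductSpace ℝ H]
    (a : H →ₗ[ℝ] H →ₗ[ℝ] ℝ)
    (hsymm : ∀ u v : H, a u v = a v u)
    (K : Submodule ℝ H) (hK : ∀ w : H, w ∈ K ↔ ∀ v : H, a w v = 0)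
    [FiniteDimensional ℝ K]
    (γ : ℝ) (hγ : 0 < γ)
    (hcoer : ∀ u ∈ Kᗮ, γ * ‖u‖ ^ 2 ≤ a u u)
    (V : Submodule ℝ H)
    (α : ℝ)
    (hα : α = sSup {r : ℝ | ∃ v ∈ V, ∃ w ∈ K, ‖v‖ = 1 ∧ ‖w‖ = 1 ∧ r = (inner ℝ v w : ℝ)})
    (β : ℝ) (hβ : β = Real.sqrt (1 - α ^ 2)) :
    ∀ u ∈ V, γ * β ^ 2 * ‖u‖ ^ 2 ≤ a u u := by
  intro u hu
  have hβ' : β = V.sinAngle K := by rw [hβ, hα]; rfl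
  have hkernel : ∀ v, a (K.starProjection u) v = 0 := (hK _).1 (K.starProjection_apply_mem u)
  set p := Kᗮ.starProjection u
  calc γ * β ^ 2 * ‖u‖ ^ 2 = γ * (V.sinAngle K ^ 2 * ‖u‖ ^ 2) := by rw [hβ']; ring
    _ ≤ γ * ‖p‖ ^ 2 := mul_le_mul_of_nonneg_left (Submodule.sinAngle_sq_mul_norm_sq_le hu) hγ.le
    _ ≤ a p p := hcoer p (Kᗮ.starProjection_apply_mem u)
    _ = a u u := by
      rw [← a.apply_add_self_of_apply_eq_zero hsymm hkernel,
        K.starProjection_add_starProjection_orthogonal]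

/-- Coercivity transfer: if `A` is coercive on the orthogonal complement of the
finite-dimensional kernel of `a`, then `A` is coercive on any closed subspace `V`
meeting the kernel trivially, with constant `γ · β(V, Ker a)²`. -/
theorem coercive_on_transversal_subspace
    {H : Type*} [NormedAddCommGroup H] [InnerProductSpace ℝ H] [CompleteSpace H]
    (a : H →ₗ[ℝ] H →ₗ[ℝ] ℝ)
    (hsymm : ∀ u v : H, a u v = a v u)
    (hcont : Continuous fun p : H × H => a p.1 p.2)
    (K : Submodule ℝ H) (hK : ∀ w : H, w ∈ K ↔ ∀ v : H, a w v = 0)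
    [FiniteDimensional ℝ K]
    (γ : ℝ) (hγ : 0 < γ)
    (hcoer : ∀ u ∈ Kᗮ, γ * ‖u‖ ^ 2 ≤ a u u)
    (V : Submodule ℝ H) (hVclosed : IsClosed (V : Set H)) (hVK : V ⊓ K = ⊥)
    (α : ℝ)
    (hα : α = sSup {r : ℝ | ∃ v ∈ V, ∃ w ∈ K, ‖v‖ = 1 ∧ ‖w‖ = 1 ∧ r = (inner ℝ v w : ℝ)})
    (β : ℝ) (hβ : β = Real.sqrt (1 - α ^ 2)) (hβpos : 0 < β) :
    ∀ u ∈ V, γ * β ^ 2 * ‖u‖ ^ 2 ≤ a u u :=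
  coercive_on_transversal_subspace_general a hsymm K hK γ hγ hcoer V α hα β hβ
end

section
/- Let H be a real Hilbert space with symmetric bilinear forms a, b, c, where c has nonnegative quadratic form. For t ∈ ℝ set bᵗ = b - t·c and let K = Ker(c). Suppose (λₙ, uₙ) are eigenpairs: a(uₙ,v) = λₙ·bᵗⁿ(uₙ,v) for all v ∈ H, with tₙ → ∞, uₙ ⇀ u weakly, λₙ → λ with λ finite and bounded away from 0 (so 1/λₙ bounded), and a, b are such that a(uₙ,v) and b(uₙ,v) are bounded in n for each fixed v (e.g. a continuous, b weakly continuous). Then c(u, v) = 0 for all v ∈ H, i.e. the weak limit u lies in K = Ker(c). -/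
/-- Weak convergence in a real Hilbert space. -/
def WeakTendsto {H : Type*} [NormedAddCommGroup H] [InnerProductSpace ℝ H]
    (u : ℕ → H) (l : H) : Prop :=
  ∀ w : H, Filter.Tendsto (fun n => (inner ℝ (u n) w : ℝ)) Filter.atTop (nhds (inner ℝ l w))

/-!
Dividing the eigenequation `a(uₙ,v) = λₙ (b(uₙ,v) - tₙ c(uₙ,v))` by `λₙ tₙ` gives
`c(uₙ,v) = (b(uₙ,v) - a(uₙ,v)/λₙ) / tₙ`. The numerator converges, since `a(·,v)` is a continuous
functional (hence weakly continuous, by Riesz), `b` is weakly continuous and `λₙ → λ ≠ 0`; as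
`tₙ → ∞` the quotient tends to `0`. Weak continuity of `c` identifies that limit with `c(u,v)`.
-/

open Filter Topology

theorem tendsto_zero_of_eventually_eq_mul_sub_mul {ι : Type*} {l : Filter ι}
    {A B C t lam : ι → ℝ} {A₀ B₀ lam₀ : ℝ}
    (hA : Tendsto A l (𝓝 A₀)) (hB : Tendsto B l (𝓝 B₀))
    (hlam : Tendsto lam l (𝓝 lam₀)) (hlam₀ : lam₀ ≠ 0) (ht : Tendsto t l atTop)
    (heq : ∀ᶠ i in l, A i = lam i * (B i - t i * C i)) :
    Tendsto C l (𝓝 0) := by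
  have hlim : Tendsto (fun i => (B i - A i / lam i) * (t i)⁻¹) l
      (𝓝 ((B₀ - A₀ / lam₀) * 0)) :=
    (hB.sub (hA.div hlam hlam₀)).mul ht.inv_tendsto_atTop
  rw [mul_zero] at hlim
  refine hlim.congr' ?_
  filter_upwards [heq, hlam.eventually_ne hlam₀, ht.eventually_gt_atTop 0]
    with i hi hlam_ne ht_pos
  rw [hi]
  field_simp
  ring

section WeakTendsto

variable {H : Type*} [NormedAddCommGroup H] [InnerProductSpace ℝ H]

theorem WeakTendsto.const (v : H) : WeakTendsto (fun _ : ℕ => v) v :=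
  fun _ => tendsto_const_nhds

theorem WeakTendsto.tendsto_continuousLinearMap [CompleteSpace H] {u : ℕ → H} {l : H}
    (hu : WeakTendsto u l) (f : H →L[ℝ] ℝ) :
    Tendsto (fun n => f (u n)) atTop (𝓝 (f l)) := by
  have hf : ∀ x, f x = inner ℝ x ((InnerProductSpace.toDual ℝ H).symm f) := fun x => by
    rw [real_inner_comm, InnerProductSpace.toDual_symm_apply]
  simpa only [hf] using hu _

theorem WeakTendsto.tendsto_apply_left [CompleteSpace H] {u : ℕ → H} {l : H}
    (hu : WeakTendsto u l) (a : H →ₗ[ℝ] H →ₗ[ℝ] ℝ)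
    (ha : Continuous fun p : H × H => a p.1 p.2) (v : H) :
    Tendsto (fun n => a (u n) v) atTop (𝓝 (a l v)) :=
  hu.tendsto_continuousLinearMap
    ⟨a.flip v, ha.comp (continuous_id.prodMk continuous_const)⟩

end WeakTendsto

theorem weak_limit_in_kernel_of_c_general
    {H : Type*} [NormedAddCommGroup H] [InnerProductSpace ℝ H] [CompleteSpace H]
    (a b c : H →ₗ[ℝ] H →ₗ[ℝ] ℝ)
    (hacont : Continuous fun p : H × H => a p.1 p.2)
    (hbweak : ∀ (x : ℕ → H) (xl : H) (y : ℕ → H) (yl : H),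
      WeakTendsto x xl → WeakTendsto y yl →
      Filter.Tendsto (fun n => b (x n) (y n)) Filter.atTop (nhds (b xl yl)))
    (hcweak : ∀ (x : ℕ → H) (xl : H) (y : ℕ → H) (yl : H),
      WeakTendsto x xl → WeakTendsto y yl →
      Filter.Tendsto (fun n => c (x n) (y n)) Filter.atTop (nhds (c xl yl)))
    (t : ℕ → ℝ) (ht : Filter.Tendsto t Filter.atTop Filter.atTop)
    (lam : ℕ → ℝ) (u : ℕ → H) (laml : ℝ) (ul : H)
    (heig : ∀ n, ∀ v : H, a (u n) v = lam n * (b (u n) v - t n * c (u n) v))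
    (hlam : Filter.Tendsto lam Filter.atTop (nhds laml))
    (hlamne : laml ≠ 0)
    (huw : WeakTendsto u ul) :
    ∀ v : H, c ul v = 0 := by
  intro v
  have hc_lim := hcweak u ul _ v huw (WeakTendsto.const v)
  have hc_zero : Tendsto (fun n => c (u n) v) atTop (𝓝 0) :=
    tendsto_zero_of_eventually_eq_mul_sub_mul (huw.tendsto_apply_left a hacont v)
      (hbweak u ul _ v huw (WeakTendsto.const v)) hlam hlamne ht
      (Eventually.of_forall fun n => heig n v)
  exact tendsto_nhds_unique hc_lim hc_zero

/-- The draining estimate: if `(λₙ, uₙ)` are eigenpairs of `(a, b - tₙ c)` with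
`tₙ → ∞`, `uₙ ⇀ u` weakly and `λₙ → λ ≠ 0`, then the weak limit `u` lies in
`Ker c`, i.e. `c(u,v) = 0` for all `v`. -/
theorem weak_limit_in_kernel_of_c
    {H : Type*} [NormedAddCommGroup H] [InnerProductSpace ℝ H] [CompleteSpace H]
    (a b c : H →ₗ[ℝ] H →ₗ[ℝ] ℝ)
    (hasymm : ∀ u v : H, a u v = a v u)
    (hbsymm : ∀ u v : H, b u v = b v u)
    (hcsymm : ∀ u v : H, c u v = c v u)
    (hcnonneg : ∀ w : H, 0 ≤ c w w)
    (hacont : Continuous fun p : H × H => a p.1 p.2)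
    (hbweak : ∀ (x : ℕ → H) (xl : H) (y : ℕ → H) (yl : H),
      WeakTendsto x xl → WeakTendsto y yl →
      Filter.Tendsto (fun n => b (x n) (y n)) Filter.atTop (nhds (b xl yl)))
    (hcweak : ∀ (x : ℕ → H) (xl : H) (y : ℕ → H) (yl : H),
      WeakTendsto x xl → WeakTendsto y yl →
      Filter.Tendsto (fun n => c (x n) (y n)) Filter.atTop (nhds (c xl yl)))
    (t : ℕ → ℝ) (ht : Filter.Tendsto t Filter.atTop Filter.atTop)
    (lam : ℕ → ℝ) (u : ℕ → H) (laml : ℝ) (ul : H)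
    (heig : ∀ n, ∀ v : H, a (u n) v = lam n * (b (u n) v - t n * c (u n) v))
    (hlam : Filter.Tendsto lam Filter.atTop (nhds laml))
    (hlamne : laml ≠ 0) (hlamn : ∀ n, lam n ≠ 0)
    (huw : WeakTendsto u ul) :
    ∀ v : H, c ul v = 0 :=
  weak_limit_in_kernel_of_c_general a b c hacont hbweak hcweak t ht lam u laml ul heig hlam hlamne
    huw
end

section
/- Let H be a real Hilbert space with continuous coercive symmetric bilinear form a, and b a weakly continuous symmetric bilinear form. Let U₊ and U₋ be the closed spans of eigenvectors of a(u,·) = λ b(u,·) with positive and negative eigenvalues respectively, and assume the quadratic form B(u) = b(u,u) satisfies B ≤ 0 on the a-orthogonal complement of U₊ and B ≥ 0 on the a-orthogonal complement of U₋. Then every u in the a-orthogonal complement of U₊ ⊕ U₋ satisfies b(u,v) = 0 for all v ∈ H; that is, (U₊ ⊕_a U₋)^{⟂_a} ⊆ Ker(b). -/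
/-!
On the `a`-orthogonal complement `W` of `U₊ ⊔ U₋` the quadratic form `B` is both `≤ 0` and `≥ 0`,
so it vanishes, and by polarization `b u w = 0` for all `u, w ∈ W`. Lax–Milgram on the closure `K`
of `U₊ ⊔ U₋` (with `a` as the coercive form) splits any `v` as `w + p` with `w ∈ W` and `p ∈ K`.
Finally `b u` vanishes on `K`: for an eigenvector `e`, `λ b e u = a e u = 0` with `λ ≠ 0`, and
`b u` is continuous.
-/

section ContinuousBilinear

variable {𝕜 E F G : Type*} [NontriviallyNormedField 𝕜]
  [NormedAddCommGroup E] [NormedSpace 𝕜 E] [NormedAddCommGroup F] [NormedSpace 𝕜 F]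
  [NormedAddCommGroup G] [NormedSpace 𝕜 G]

def LinearMap.toContinuousLinearMap₂ (f : E →ₗ[𝕜] F →ₗ[𝕜] G)
    (hf : Continuous fun p : E × F => f p.1 p.2) : E →L[𝕜] F →L[𝕜] G :=
  let f' : E →ₗ[𝕜] F →L[𝕜] G :=
    { toFun x := ⟨f x, hf.comp (.prodMk_right x)⟩
      map_add' x y := by ext; simp
      map_smul' c x := by ext; simp }
  ⟨f', ContinuousLinearMap.continuous_of_continuous_uncurry f' hf⟩

@[simp]
theorem LinearMap.toContinuousLinearMap₂_apply (f : E →ₗ[𝕜] F →ₗ[𝕜] G)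
    (hf : Continuous fun p : E × F => f p.1 p.2) (x : E) (y : F) :
    f.toContinuousLinearMap₂ hf x y = f x y :=
  rfl

end ContinuousBilinear

theorem IsCoercive.exists_sub_orthogonal {V : Type*} [NormedAddCommGroup V]
    [InnerProductSpace ℝ V] {B : V →L[ℝ] V →L[ℝ] ℝ} (hB : IsCoercive B) (K : Submodule ℝ V)
    [CompleteSpace K] (v : V) :
    ∃ p ∈ K, ∀ k ∈ K, B (v - p) k = 0 := by
  have hBK : IsCoercive (B.bilinearComp K.subtypeL K.subtypeL) := by
    obtain ⟨c, hc, hcoer⟩ := hB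
    exact ⟨c, hc, fun k => hcoer k⟩
  let p : K := hBK.continuousLinearEquivOfBilin.symm
    ((InnerProductSpace.toDual ℝ K).symm ((B v).comp K.subtypeL))
  refine ⟨p, p.2, fun k hk => ?_⟩
  have hp := hBK.continuousLinearEquivOfBilin_apply p ⟨k, hk⟩
  simp only [p, ContinuousLinearEquiv.apply_symm_apply,
    InnerProductSpace.toDual_symm_apply] at hp
  simp only [map_sub, sub_apply]
  exact sub_eq_zero.mpr hp

theorem LinearMap.apply_eq_zero_of_forall_self_eq_zero {R M : Type*} [CommRing R]
    [NoZeroDivisors R] [CharZero R] [AddCommGroup M] [Module R M]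
    (b : M →ₗ[R] M →ₗ[R] R) (hb : ∀ x y, b x y = b y x) {W : Submodule R M}
    (hW : ∀ z ∈ W, b z z = 0) {x y : M} (hx : x ∈ W) (hy : y ∈ W) : b x y = 0 := by
  have h := hW (x + y) (W.add_mem hx hy)
  simp only [map_add, add_apply, hW x hx, hW y hy, hb y x, zero_add, add_zero] at h
  exact add_self_eq_zero.mp h

theorem topologicalClosure_span_le_ker_of_eigenvectors {H : Type*} [NormedAddCommGroup H]
    [NormedSpace ℝ H] {a b : H →ₗ[ℝ] H →ₗ[ℝ] ℝ} (hasymm : ∀ u v, a u v = a v u)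
    (hbsymm : ∀ u v, b u v = b v u) {u : H} (hbu : Continuous (b u)) {E : Set H}
    (hE : ∀ e ∈ E, ∃ l : ℝ, l ≠ 0 ∧ ∀ v, a e v = l * b e v) (hu : ∀ e ∈ E, a u e = 0) :
    (Submodule.span ℝ E).topologicalClosure ≤ LinearMap.ker (b u) := by
  refine Submodule.topologicalClosure_minimal _ (Submodule.span_le.mpr fun e he => ?_)
    (isClosed_eq hbu continuous_const)
  obtain ⟨l, hl, hle⟩ := hE e he
  have h : l * b e u = 0 := by rw [← hle, hasymm, hu e he]
  rw [SetLike.mem_coe, LinearMap.mem_ker, hbsymm]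
  exact (mul_eq_zero.mp h).resolve_left hl

/-- The `a`-orthogonal complement of `U₊ ⊕ U₋` (the closed spans of the eigenvectors
with positive and negative eigenvalues) is contained in the kernel of `b`. -/
theorem complement_of_eigenspaces_subset_kernel
    {H : Type*} [NormedAddCommGroup H] [InnerProductSpace ℝ H] [CompleteSpace H]
    (a b : H →ₗ[ℝ] H →ₗ[ℝ] ℝ)
    (hasymm : ∀ u v : H, a u v = a v u)
    (hbsymm : ∀ u v : H, b u v = b v u)
    (hacont : Continuous fun p : H × H => a p.1 p.2)
    (γ : ℝ) (hγ : 0 < γ) (hcoer : ∀ u : H, γ * ‖u‖ ^ 2 ≤ a u u)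
    (hbcont : Continuous fun p : H × H => b p.1 p.2)
    (Eplus Eminus : Set H)
    (hEp : ∀ e ∈ Eplus, e ≠ 0 ∧ ∃ l : ℝ, 0 < l ∧ ∀ v : H, a e v = l * b e v)
    (hEm : ∀ e ∈ Eminus, e ≠ 0 ∧ ∃ l : ℝ, l < 0 ∧ ∀ v : H, a e v = l * b e v)
    (Up Um : Submodule ℝ H)
    (hUp : Up = (Submodule.span ℝ Eplus).topologicalClosure)
    (hUm : Um = (Submodule.span ℝ Eminus).topologicalClosure)
    (hBneg : ∀ u : H, (∀ v ∈ Up, a u v = 0) → b u u ≤ 0)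
    (hBpos : ∀ u : H, (∀ v ∈ Um, a u v = 0) → 0 ≤ b u u) :
    ∀ u : H, (∀ v ∈ Up ⊔ Um, a u v = 0) → ∀ v : H, b u v = 0 := by
  intro u hu v
  -- `flip` puts the complement in the first argument of `a`, as in the hypotheses
  set W := (Up ⊔ Um).orthogonalBilin a.flip
  have hBW : ∀ z ∈ W, b z z = 0 := fun z hz => le_antisymm
    (hBneg z fun x hx => hz x (Submodule.mem_sup_left hx))
    (hBpos z fun x hx => hz x (Submodule.mem_sup_right hx))
  set K := (Up ⊔ Um).topologicalClosure
  have : CompleteSpace K := (Submodule.isClosed_topologicalClosure _).completeSpace_coe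
  have hacoer : IsCoercive (a.toContinuousLinearMap₂ hacont) :=
    ⟨γ, hγ, fun x => by simpa [sq, mul_assoc] using hcoer x⟩
  obtain ⟨p, hpK, hp⟩ := hacoer.exists_sub_orthogonal K v
  have hvp : v - p ∈ W := fun x hx => hp x (Submodule.le_topologicalClosure _ hx)
  have hbu : Continuous (b u) := hbcont.comp (.prodMk_right u)
  have hKker : K ≤ LinearMap.ker (b u) := by
    subst hUp hUm
    refine Submodule.topologicalClosure_minimal _ (sup_le ?_ ?_) (isClosed_eq hbu continuous_const)
    · exact topologicalClosure_span_le_ker_of_eigenvectors hasymm hbsymm hbu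
        (fun e he => (hEp e he).2.imp fun _ hl => ⟨hl.1.ne', hl.2⟩)
        fun e he => hu e (Submodule.mem_sup_left (Submodule.le_topologicalClosure _
          (Submodule.subset_span he)))
    · exact topologicalClosure_span_le_ker_of_eigenvectors hasymm hbsymm hbu
        (fun e he => (hEm e he).2.imp fun _ hl => ⟨hl.1.ne, hl.2⟩)
        fun e he => hu e (Submodule.mem_sup_right (Submodule.le_topologicalClosure _
          (Submodule.subset_span he)))
  calc b u v = b u (v - p) + b u p := by rw [map_sub]; ring
    _ = 0 := by rw [b.apply_eq_zero_of_forall_self_eq_zero hbsymm hBW hu hvp, hKker hpK, add_zero]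
end
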